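/- Let p ≥ 5 be a prime, e ≥ 1, and A, B ∈ R = ℤ/p^eℤ with 4A³ + 27B² a unit of R. Fix a function z : R → R such that for every X with p ∣ X one has p ∣ z(X) and z(X) = X³ + A·X·z(X)² + B·z(X)³, and define the addition op and the iteration iter : ℕ → R with step (p : R) as in the context. Then for every X ∈ R with p ∣ X there exists n < p^(e−1) with iter n = X. (The subgroup at infinity of E_{A,B}(ℤ/p^eℤ) is a ℤ/p^(e−1)ℤ-torsor generated by the point (p : 1 : z(p)).) -/
import Mathlib


/-- First Bosma–Lenstra addition-law polynomial, specialized at `Y₁ = Y₂ = 1`. -/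
def bosmaLenstraT1 {R : Type*} [CommRing R] (A B X₁ Z₁ X₂ Z₂ : R) : R :=
  (X₁ + X₂) - A * X₁ * X₂ * (Z₁ + Z₂) - A * (X₁ + X₂) * (X₁ * Z₂ + X₂ * Z₁)
    - 3 * B * (X₁ + X₂) * Z₁ * Z₂ - 3 * B * (X₁ * Z₂ + X₂ * Z₁) * (Z₁ + Z₂)
    + A ^ 2 * (Z₁ + Z₂) * Z₁ * Z₂

/-- Second Bosma–Lenstra addition-law polynomial, specialized at `Y₁ = Y₂ = 1`. -/
def bosmaLenstraT2 {R : Type*} [CommRing R] (A B X₁ Z₁ X₂ Z₂ : R) : R :=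
  1 + 3 * A * X₁ ^ 2 * X₂ ^ 2 + 9 * B * X₁ * X₂ * (X₁ * Z₂ + X₂ * Z₁)
    - A ^ 2 * X₁ * Z₂ * (X₁ * Z₂ + 2 * X₂ * Z₁)
    - A ^ 2 * X₂ * Z₁ * (2 * X₁ * Z₂ + X₂ * Z₁)
    - 3 * A * B * Z₁ * Z₂ * (X₁ * Z₂ + X₂ * Z₁)
    - (A ^ 3 + 9 * B ^ 2) * Z₁ ^ 2 * Z₂ ^ 2

/-- `X`-coordinate of the sum of the points at infinity `(X₁ : 1 : z X₁)` and
`(X₂ : 1 : z X₂)`, computed via the Bosma–Lenstra addition law. -/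
noncomputable def bosmaLenstraOp {R : Type*} [CommRing R] (A B : R) (z : R → R) (X₁ X₂ : R) : R :=
  Ring.inverse (bosmaLenstraT2 A B X₁ (z X₁) X₂ (z X₂)) *
    bosmaLenstraT1 A B X₁ (z X₁) X₂ (z X₂)

/-- `X`-coordinate of the `n`-th multiple of the point at infinity `(s : 1 : z s)`. -/
noncomputable def bosmaLenstraIter {R : Type*} [CommRing R] (A B : R) (z : R → R) (s : R) : ℕ → R
  | 0 => 0
  | n + 1 => bosmaLenstraOp A B z (bosmaLenstraIter A B z s n) s


section Aux
variable {R : Type*} [CommRing R]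

lemma aux_t1_diff (A B P x y zx zy zp b d zb zc t : R)
    (hx : x = P*(b+d)) (hy : y = P*b) (hzy : zy = P*zb) (hzp : zp = P*zc)
    (hzx : zx = zy + (P*d)*(P^2*t)) :
    bosmaLenstraT1 A B x zx P zp - bosmaLenstraT1 A B y zy P zp
      = (x - y) * (1 + P^2 * (-3*B*zc^2 - 6*B*zb*zc - 2*A*zc - 2*A*zb - A*d*zc - 2*A*b*zc
          - 6*P^2*B*zc*t - 6*P^2*B*zb*t - 6*P^2*B*d*zc*t - 6*P^2*B*b*zc*t - P^2*A*t
          - 2*P^2*A*d*t - 2*P^2*A*b*t + P^2*A^2*zc^2*t + 2*P^2*A^2*zb*zc*t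
          - 3*P^4*B*d*t^2 + P^4*A^2*d*zc*t^2)) := by
  subst hzx hzy hzp hx hy
  unfold bosmaLenstraT1
  ring

lemma aux_t2_diff (A B P x y zx zy zp b d zb zc t : R)
    (hx : x = P*(b+d)) (hy : y = P*b) (hzy : zy = P*zb) (hzp : zp = P*zc)
    (hzx : zx = zy + (P*d)*(P^2*t)) :
    bosmaLenstraT2 A B x zx P zp - bosmaLenstraT2 A B y zy P zp
      = (x - y) * (P^2 * (9*P*B*zb + 9*P*B*d*zc + 18*P*B*b*zc + 3*P*A*d + 6*P*A*b
          - 3*P*A*B*zb*zc^2 - 4*P*A^2*zb*zc - P*A^2*d*zc^2 - 2*P*A^2*b*zc^2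
          + 9*P^3*B*d*t + 9*P^3*B*b*t - 18*P^3*B^2*zb*zc^2*t - 6*P^3*A*B*zb*zc*t
          - 3*P^3*A*B*d*zc^2*t - 3*P^3*A*B*b*zc^2*t - 2*P^3*A^2*zb*t - 4*P^3*A^2*d*zc*t
          - 4*P^3*A^2*b*zc*t - 2*P^3*A^3*zb*zc^2*t - 9*P^5*B^2*d*zc^2*t^2
          - 3*P^5*A*B*d*zc*t^2 - P^5*A^2*d*t^2 - P^5*A^3*d*zc^2*t^2)) := by
  subst hzx hzy hzp hx hy
  unfold bosmaLenstraT2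
  ring

lemma aux_t2_val (A B P y zy zp b zb zc : R)
    (hy : y = P*b) (hzy : zy = P*zb) (hzp : zp = P*zc) :
    bosmaLenstraT2 A B y zy P zp
      = 1 + P^2 * (9*P^2*B*b*zb + 9*P^2*B*b^2*zc - 9*P^2*B^2*zb^2*zc^2 + 3*P^2*A*b^2
          - 3*P^2*A*B*zb^2*zc - 3*P^2*A*B*b*zb*zc^2 - P^2*A^2*zb^2 - 4*P^2*A^2*b*zb*zc
          - P^2*A^2*b^2*zc^2 - P^2*A^3*zb^2*zc^2) := by
  subst hzy hzp hy
  unfold bosmaLenstraT2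
  ring

lemma aux_t1_val (A B P y zy zp b zb zc : R)
    (hy : y = P*b) (hzy : zy = P*zb) (hzp : zp = P*zc) :
    bosmaLenstraT1 A B y zy P zp
      = P * (1 + b - 6*P^2*B*zb*zc - 3*P^2*B*zb^2 - 3*P^2*B*b*zc^2 - 6*P^2*B*b*zb*zc
          - P^2*A*zb - 2*P^2*A*b*zc - 2*P^2*A*b*zb - P^2*A*b^2*zc + P^2*A^2*zb*zc^2
          + P^2*A^2*zb^2*zc) := by
  subst hzy hzp hy
  unfold bosmaLenstraT1
  ring

end Aux

/-- The subgroup at infinity of `E_{A,B}(ℤ/p^eℤ)` is generated by the point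
`(p : 1 : z p)`: every `X` divisible by `p` is the `X`-coordinate of some multiple
`n·(p : 1 : z p)` with `n < p^(e-1)`. -/
theorem infinity_subgroup_generated_by_p
    {p : ℕ} (hp : p.Prime) (hp5 : 5 ≤ p) {e : ℕ} (he : 1 ≤ e)
    (A B : ZMod (p ^ e)) (hdisc : IsUnit (4 * A ^ 3 + 27 * B ^ 2))
    (z : ZMod (p ^ e) → ZMod (p ^ e))
    (hz : ∀ X : ZMod (p ^ e), (p : ZMod (p ^ e)) ∣ X →
      (p : ZMod (p ^ e)) ∣ z X ∧ z X = X ^ 3 + A * X * (z X) ^ 2 + B * (z X) ^ 3) :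
    ∀ X : ZMod (p ^ e), (p : ZMod (p ^ e)) ∣ X →
      ∃ n : ℕ, n < p ^ (e - 1) ∧ bosmaLenstraIter A B z (p : ZMod (p ^ e)) n = X := by
  classical
  haveI : NeZero (p ^ e) := ⟨pow_ne_zero e hp.ne_zero⟩
  set P : ZMod (p ^ e) := (p : ZMod (p ^ e)) with hP
  -- basic nilpotency / unit facts
  have hPe : P ^ e = 0 := by
    rw [hP, ← Nat.cast_pow, ZMod.natCast_self]
  have hnil : ∀ m : ZMod (p ^ e), IsNilpotent (P * m) :=
    fun m => ⟨e, by rw [mul_pow, hPe, zero_mul]⟩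
  have hunit1 : ∀ m : ZMod (p ^ e), IsUnit (1 + P * m) := fun m => (hnil m).isUnit_one_add
  have hunit2 : ∀ m : ZMod (p ^ e), IsUnit (1 + P ^ 2 * m) := by
    intro m
    have := hunit1 (P * m)
    rwa [show 1 + P * (P * m) = 1 + P ^ 2 * m by ring] at this
  have hunitR : ∀ r : ℕ, ¬ p ∣ r → ∀ m : ZMod (p ^ e), IsUnit ((r : ZMod (p ^ e)) + P * m) := by
    intro r hr m
    refine (hnil m).isUnit_add_left_of_commute ?_ (Commute.all _ _)
    exact (ZMod.isUnit_iff_coprime r (p ^ e)).mpr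
      (((Nat.Prime.coprime_iff_not_dvd hp).mpr hr).symm.pow_right e)
  -- z 0 = 0
  have hz0 : z 0 = 0 := by
    obtain ⟨hd, heq⟩ := hz 0 ⟨0, by ring⟩
    obtain ⟨w, hw⟩ := hd
    have hu : IsUnit (1 + P * (-(B * P * w ^ 2))) := hunit1 _
    have h0 : z 0 * (1 + P * (-(B * P * w ^ 2))) = 0 := by
      linear_combination heq + (B * z 0 * (z 0 + P * w)) * hw
    exact hu.mul_left_eq_zero.mp h0
  -- difference of z-values
  have hzdiff : ∀ x y : ZMod (p ^ e), P ∣ x → P ∣ y →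
      ∃ t, z x - z y = (x - y) * (P ^ 2 * t) := by
    intro x y hx hy
    obtain ⟨a, ha⟩ := hx
    obtain ⟨b, hb⟩ := hy
    obtain ⟨hdx, heqx⟩ := hz x ⟨a, ha⟩
    obtain ⟨hdy, heqy⟩ := hz y ⟨b, hb⟩
    obtain ⟨za, hza⟩ := hdx
    obtain ⟨zbw, hzb⟩ := hdy
    subst ha hb
    rw [hza] at heqx
    rw [hzb] at heqy
    rw [hza, hzb]
    have hVu : IsUnit (1 - (A * (P*a) * (P*za + P*zbw)
        + B * ((P*za)^2 + (P*za)*(P*zbw) + (P*zbw)^2))) := by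
      have := hunit1 (-(A * a * (P*za + P*zbw) + B * P * (za^2 + za*zbw + zbw^2)))
      rwa [show 1 + P * (-(A * a * (P*za + P*zbw) + B * P * (za^2 + za*zbw + zbw^2)))
        = 1 - (A * (P*a) * (P*za + P*zbw)
            + B * ((P*za)^2 + (P*za)*(P*zbw) + (P*zbw)^2)) by ring] at this
    set V : ZMod (p ^ e) := 1 - (A * (P*a) * (P*za + P*zbw)
        + B * ((P*za)^2 + (P*za)*(P*zbw) + (P*zbw)^2)) with hV
    have h1 : (P*za - P*zbw) * V
        = (P*a - P*b) * (P^2 * (a^2 + a*b + b^2 + A*zbw^2)) := by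
      rw [hV]
      linear_combination heqx - heqy
    have h2 : V * Ring.inverse V = 1 := Ring.mul_inverse_cancel V hVu
    exact ⟨(a^2 + a*b + b^2 + A*zbw^2) * Ring.inverse V,
      by linear_combination Ring.inverse V * h1 - (P*za - P*zbw) * h2⟩
  -- z p is divisible by p
  obtain ⟨zcw, hzc⟩ := (hz P ⟨1, (mul_one P).symm⟩).1
  -- key difference estimate for the addition step
  have hopdiff : ∀ x y : ZMod (p ^ e), P ∣ x → P ∣ y →
      ∃ c, bosmaLenstraOp A B z x P - bosmaLenstraOp A B z y P
        = (x - y) * (1 + P ^ 2 * c) := by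
    intro x y hx hy
    obtain ⟨a, ha⟩ := hx
    obtain ⟨b, hb⟩ := hy
    obtain ⟨zaw, hza⟩ := (hz x ⟨a, ha⟩).1
    obtain ⟨zbw, hzb⟩ := (hz y ⟨b, hb⟩).1
    obtain ⟨t, ht⟩ := hzdiff x y ⟨a, ha⟩ ⟨b, hb⟩
    have hx' : x = P*(b + (a - b)) := by rw [ha]; ring
    have hzx' : z x = z y + (P*(a-b))*(P^2*t) := by
      linear_combination ht + P^2*t*ha - P^2*t*hb
    obtain ⟨q1, h1d⟩ : ∃ q, bosmaLenstraT1 A B x (z x) P (z P)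
        - bosmaLenstraT1 A B y (z y) P (z P) = (x - y) * (1 + P^2*q) :=
      ⟨_, aux_t1_diff A B P x y (z x) (z y) (z P) b (a-b) zbw zcw t hx' hb hzb hzc hzx'⟩
    obtain ⟨q2, h2d⟩ : ∃ q, bosmaLenstraT2 A B x (z x) P (z P)
        - bosmaLenstraT2 A B y (z y) P (z P) = (x - y) * (P^2*q) :=
      ⟨_, aux_t2_diff A B P x y (z x) (z y) (z P) b (a-b) zbw zcw t hx' hb hzb hzc hzx'⟩
    obtain ⟨r2x, h2x⟩ : ∃ r, bosmaLenstraT2 A B x (z x) P (z P) = 1 + P^2*r :=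
      ⟨_, aux_t2_val A B P x (z x) (z P) a zaw zcw ha hza hzc⟩
    obtain ⟨r2y, h2y⟩ : ∃ r, bosmaLenstraT2 A B y (z y) P (z P) = 1 + P^2*r :=
      ⟨_, aux_t2_val A B P y (z y) (z P) b zbw zcw hb hzb hzc⟩
    obtain ⟨m1, h1y⟩ : ∃ m, bosmaLenstraT1 A B y (z y) P (z P) = P*m :=
      ⟨_, aux_t1_val A B P y (z y) (z P) b zbw zcw hb hzb hzc⟩
    have hu2x : IsUnit (bosmaLenstraT2 A B x (z x) P (z P)) := by
      rw [h2x]; exact hunit2 r2x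
    have hu2y : IsUnit (bosmaLenstraT2 A B y (z y) P (z P)) := by
      rw [h2y]; exact hunit2 r2y
    have hI1 : bosmaLenstraT2 A B x (z x) P (z P)
        * Ring.inverse (bosmaLenstraT2 A B x (z x) P (z P)) = 1 :=
      Ring.mul_inverse_cancel _ hu2x
    have hI2 : bosmaLenstraT2 A B y (z y) P (z P)
        * Ring.inverse (bosmaLenstraT2 A B y (z y) P (z P)) = 1 :=
      Ring.mul_inverse_cancel _ hu2y
    have hI1' : Ring.inverse (bosmaLenstraT2 A B x (z x) P (z P))
        = 1 - P^2*(r2x * Ring.inverse (bosmaLenstraT2 A B x (z x) P (z P))) := by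
      linear_combination hI1 - Ring.inverse (bosmaLenstraT2 A B x (z x) P (z P)) * h2x
    have hI2' : Ring.inverse (bosmaLenstraT2 A B y (z y) P (z P))
        = 1 - P^2*(r2y * Ring.inverse (bosmaLenstraT2 A B y (z y) P (z P))) := by
      linear_combination hI2 - Ring.inverse (bosmaLenstraT2 A B y (z y) P (z P)) * h2y
    have key0 : bosmaLenstraT2 A B y (z y) P (z P) * bosmaLenstraT1 A B x (z x) P (z P)
        - bosmaLenstraT2 A B x (z x) P (z P) * bosmaLenstraT1 A B y (z y) P (z P)
        = (x - y) * (1 + P^2*(r2y + q1 + P^2*r2y*q1 - P*q2*m1)) := by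
      linear_combination bosmaLenstraT2 A B y (z y) P (z P) * h1d
        - bosmaLenstraT1 A B y (z y) P (z P) * h2d
        + (x-y)*(1+P^2*q1)*h2y - (x-y)*P^2*q2*h1y
    have hD : bosmaLenstraOp A B z x P - bosmaLenstraOp A B z y P
        = Ring.inverse (bosmaLenstraT2 A B x (z x) P (z P))
          * Ring.inverse (bosmaLenstraT2 A B y (z y) P (z P))
          * ((x - y) * (1 + P^2*(r2y + q1 + P^2*r2y*q1 - P*q2*m1))) := by
      simp only [bosmaLenstraOp]
      linear_combination Ring.inverse (bosmaLenstraT2 A B x (z x) P (z P))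
          * Ring.inverse (bosmaLenstraT2 A B y (z y) P (z P)) * key0
        - Ring.inverse (bosmaLenstraT2 A B x (z x) P (z P))
          * bosmaLenstraT1 A B x (z x) P (z P) * hI2
        + Ring.inverse (bosmaLenstraT2 A B y (z y) P (z P))
          * bosmaLenstraT1 A B y (z y) P (z P) * hI1
    set G : ZMod (p ^ e) := r2y + q1 + P^2*r2y*q1 - P*q2*m1 with hG
    set u1 : ZMod (p ^ e) := r2x * Ring.inverse (bosmaLenstraT2 A B x (z x) P (z P)) with hu1
    set u2 : ZMod (p ^ e) := r2y * Ring.inverse (bosmaLenstraT2 A B y (z y) P (z P)) with hu2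
    refine ⟨G - u1 - u2 - P^2*G*u1 - P^2*G*u2 + P^2*u1*u2 + P^4*G*u1*u2, ?_⟩
    rw [hD]
    linear_combination (Ring.inverse (bosmaLenstraT2 A B y (z y) P (z P))
        * ((x-y)*(1+P^2*G))) * hI1'
      + ((1 - P^2*u1) * ((x-y)*(1+P^2*G))) * hI2'
  -- the first step lands exactly on `p`
  have hop0 : bosmaLenstraOp A B z 0 P = P := by
    have h1 : bosmaLenstraT1 A B 0 (z 0) P (z P) = P := by
      rw [hz0]; unfold bosmaLenstraT1; ring
    have h2 : bosmaLenstraT2 A B 0 (z 0) P (z P) = 1 := by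
      rw [hz0]; unfold bosmaLenstraT2; ring
    unfold bosmaLenstraOp
    rw [h1, h2, Ring.inverse_one, one_mul]
  -- the step preserves divisibility by p
  have hopmem : ∀ x : ZMod (p ^ e), P ∣ x → P ∣ bosmaLenstraOp A B z x P := by
    intro x hx
    obtain ⟨c, hc⟩ := hopdiff x 0 hx ⟨0, by ring⟩
    obtain ⟨a, ha⟩ := hx
    exact ⟨1 + a*(1+P^2*c), by linear_combination hc + hop0 + (1+P^2*c)*ha⟩
  -- iterates of the step map
  have hFiter : ∀ n, bosmaLenstraIter A B z P n
      = (fun w => bosmaLenstraOp A B z w P)^[n] 0 := by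
    intro n
    induction n with
    | zero => rfl
    | succ n ih =>
      rw [Function.iterate_succ_apply']
      simp only [bosmaLenstraIter]
      rw [ih]
  have hDmem : ∀ m (x : ZMod (p ^ e)), P ∣ x
      → P ∣ (fun w => bosmaLenstraOp A B z w P)^[m] x := by
    intro m
    induction m with
    | zero => intro x hx; simpa using hx
    | succ m ih =>
      intro x hx
      rw [Function.iterate_succ_apply']
      exact hopmem _ (ih x hx)
  have hDdiff : ∀ m (x y : ZMod (p ^ e)), P ∣ x → P ∣ y →
      ∃ c, (fun w => bosmaLenstraOp A B z w P)^[m] x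
        - (fun w => bosmaLenstraOp A B z w P)^[m] y = (x - y) * (1 + P^2*c) := by
    intro m
    induction m with
    | zero => intro x y hx hy; exact ⟨0, by simp⟩
    | succ m ih =>
      intro x y hx hy
      obtain ⟨c, hc⟩ := ih x y hx hy
      obtain ⟨c', hc'⟩ := hopdiff ((fun w => bosmaLenstraOp A B z w P)^[m] x)
        ((fun w => bosmaLenstraOp A B z w P)^[m] y) (hDmem m x hx) (hDmem m y hy)
      refine ⟨c + c' + P^2*c*c', ?_⟩
      rw [Function.iterate_succ_apply', Function.iterate_succ_apply']
      show bosmaLenstraOp A B z ((fun w => bosmaLenstraOp A B z w P)^[m] x) P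
        - bosmaLenstraOp A B z ((fun w => bosmaLenstraOp A B z w P)^[m] y) P = _
      linear_combination hc' + (1+P^2*c')*hc
  have hiterdvd : ∀ n, P ∣ bosmaLenstraIter A B z P n := by
    intro n
    rw [hFiter]
    exact hDmem n 0 ⟨0, by ring⟩
  have hshift : ∀ a m : ℕ, bosmaLenstraIter A B z P (a + m)
      = (fun w => bosmaLenstraOp A B z w P)^[m] (bosmaLenstraIter A B z P a) := by
    intro a m
    rw [hFiter, hFiter, Nat.add_comm, Function.iterate_add_apply]
  have hiter1 : bosmaLenstraIter A B z P 1 = P := by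
    have : bosmaLenstraIter A B z P 1 = bosmaLenstraOp A B z (bosmaLenstraIter A B z P 0) P := rfl
    rw [this]
    show bosmaLenstraOp A B z 0 P = P
    exact hop0
  -- multiples: iter (j*m) = iter m * (j + p² w)
  have hL : ∀ m j : ℕ, ∃ w, bosmaLenstraIter A B z P (j*m)
      = bosmaLenstraIter A B z P m * ((j : ZMod (p ^ e)) + P^2*w) := by
    intro m j
    induction j with
    | zero => exact ⟨0, by simp [bosmaLenstraIter]⟩
    | succ j ih =>
      obtain ⟨w, hw⟩ := ih
      obtain ⟨c, hc⟩ := hDdiff m (bosmaLenstraIter A B z P (j*m)) 0 (hiterdvd _) ⟨0, by ring⟩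
      have h0 : (fun w => bosmaLenstraOp A B z w P)^[m] (0 : ZMod (p ^ e))
          = bosmaLenstraIter A B z P m := (hFiter m).symm
      refine ⟨(j : ZMod (p ^ e))*c + w + P^2*w*c, ?_⟩
      rw [show (j+1)*m = j*m + m from by ring, hshift]
      push_cast
      linear_combination hc + (1+P^2*c)*hw + h0
  -- exact valuation of iter (p^k * r)
  have hC : ∀ k : ℕ, ∀ r : ℕ, ¬ p ∣ r → ∃ u : ZMod (p ^ e),
      IsUnit u ∧ bosmaLenstraIter A B z P (p^k * r) = P^(k+1) * u := by
    intro k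
    induction k with
    | zero =>
      intro r hr
      obtain ⟨w, hw⟩ := hL 1 r
      refine ⟨(r : ZMod (p ^ e)) + P^2*w, ?_, ?_⟩
      · have := hunitR r hr (P*w)
        rwa [show (r : ZMod (p ^ e)) + P*(P*w) = (r : ZMod (p ^ e)) + P^2*w from by ring] at this
      · rw [show p^0*r = r*1 from by ring, hw, hiter1]
        ring
    | succ k ih =>
      intro r hr
      obtain ⟨u, hu, hval⟩ := ih 1 (fun h => hp.ne_one (Nat.dvd_one.mp h))
      obtain ⟨w, hw⟩ := hL (p^k) (p*r)
      refine ⟨u*((r : ZMod (p ^ e)) + P*w), hu.mul (hunitR r hr w), ?_⟩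
      rw [show p^(k+1)*r = (p*r)*(p^k) from by ring, hw]
      have hpk : bosmaLenstraIter A B z P (p^k) = P^(k+1)*u := by
        rw [show p^k = p^k*1 from (Nat.mul_one _).symm]
        exact hval
      rw [hpk, Nat.cast_mul, ← hP]
      ring
  -- iter r ≠ 0 for 0 < r < p^(e-1)
  have hzero : ∀ r : ℕ, 0 < r → r < p^(e-1) → bosmaLenstraIter A B z P r ≠ 0 := by
    intro r hr0 hrlt h0
    obtain ⟨k, r', hr', hrr⟩ := Nat.exists_eq_pow_mul_and_not_dvd hr0.ne' p hp.ne_one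
    obtain ⟨u, hu, hval⟩ := hC k r' hr'
    rw [hrr] at h0
    rw [h0] at hval
    have h1 : P^(k+1) = 0 := hu.mul_left_eq_zero.mp hval.symm
    have h2 : (p:ℕ)^e ∣ p^(k+1) := by
      have : ((p^(k+1) : ℕ) : ZMod (p ^ e)) = 0 := by
        rw [Nat.cast_pow, ← hP, h1]
      exact (ZMod.natCast_eq_zero_iff _ _).mp this
    have h3 : e ≤ k+1 := (pow_le_pow_iff_right₀ hp.one_lt).mp
      (Nat.le_of_dvd (pow_pos hp.pos _) h2)
    have h4 : p^(e-1) ≤ p^k := Nat.pow_le_pow_right hp.pos (by omega)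
    have h5 : p^k ≤ r := by
      rw [hrr]
      exact Nat.le_mul_of_pos_right _ (Nat.pos_of_ne_zero (fun h => hr' (h ▸ dvd_zero p)))
    omega
  -- injectivity of iter on [0, p^(e-1))
  have hinj : ∀ n m : ℕ, n < m → m < p^(e-1) →
      bosmaLenstraIter A B z P n ≠ bosmaLenstraIter A B z P m := by
    intro n m hnm hmlt heq
    obtain ⟨c, hc⟩ := hDdiff n (bosmaLenstraIter A B z P (m-n)) 0 (hiterdvd _) ⟨0, by ring⟩
    have h1 : (fun w => bosmaLenstraOp A B z w P)^[n] (bosmaLenstraIter A B z P (m-n))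
        = bosmaLenstraIter A B z P m := by
      rw [← hshift]
      congr 1
      omega
    have h2 : (fun w => bosmaLenstraOp A B z w P)^[n] (0 : ZMod (p ^ e))
        = bosmaLenstraIter A B z P n := (hFiter n).symm
    rw [h1, h2, heq] at hc
    have h3 : bosmaLenstraIter A B z P (m-n) * (1+P^2*c) = 0 := by
      linear_combination -hc
    have h4 : bosmaLenstraIter A B z P (m-n) = 0 := (hunit2 c).mul_left_eq_zero.mp h3
    exact hzero (m-n) (by omega) (by omega) h4
  -- counting argument
  intro X hX
  have hNpos : 0 < p^(e-1) := pow_pos hp.pos _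
  have hTsub : (Finset.univ.filter (fun x : ZMod (p ^ e) => P ∣ x))
      ⊆ (Finset.range (p^(e-1))).image (fun n : ℕ => ((p*n : ℕ) : ZMod (p ^ e))) := by
    intro x hx
    rw [Finset.mem_filter] at hx
    obtain ⟨-, y, hy⟩ := hx
    refine Finset.mem_image.mpr ⟨y.val % p^(e-1), Finset.mem_range.mpr (Nat.mod_lt _ hNpos), ?_⟩
    have hyv : ((y.val : ℕ) : ZMod (p ^ e)) = y := ZMod.natCast_rightInverse y
    have hmod : p*(y.val % p^(e-1)) ≡ p*y.val [MOD p^e] := by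
      have h5 : y.val % p^(e-1) ≡ y.val [MOD p^(e-1)] := Nat.mod_modEq _ _
      have h6 := h5.mul_left' (c := p)
      rwa [show p*p^(e-1) = p^e from by
        rw [← pow_succ']
        congr 1
        omega] at h6
    have h7 : ((p*(y.val % p^(e-1)) : ℕ) : ZMod (p ^ e)) = ((p*y.val : ℕ) : ZMod (p ^ e)) :=
      (ZMod.natCast_eq_natCast_iff _ _ _).mpr hmod
    rw [h7, Nat.cast_mul, hyv, ← hP, hy]
  have hSinj : Set.InjOn (bosmaLenstraIter A B z P) (Finset.range (p^(e-1))) := by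
    intro a ha b hb hab
    simp only [Finset.coe_range, Set.mem_Iio] at ha hb
    by_contra hne
    rcases Nat.lt_or_ge a b with h | h
    · exact hinj a b h hb hab
    · exact hinj b a (by omega) ha hab.symm
  have hScard : ((Finset.range (p^(e-1))).image (bosmaLenstraIter A B z P)).card = p^(e-1) := by
    rw [Finset.card_image_of_injOn hSinj, Finset.card_range]
  have hST : ((Finset.range (p^(e-1))).image (bosmaLenstraIter A B z P))
      ⊆ (Finset.univ.filter (fun x : ZMod (p ^ e) => P ∣ x)) := by
    intro x hx
    obtain ⟨n, -, rfl⟩ := Finset.mem_image.mp hx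
    exact Finset.mem_filter.mpr ⟨Finset.mem_univ _, hiterdvd n⟩
  have hcardT : (Finset.univ.filter (fun x : ZMod (p ^ e) => P ∣ x)).card ≤ p^(e-1) :=
    le_trans (Finset.card_le_card hTsub)
      (le_trans Finset.card_image_le (le_of_eq (Finset.card_range _)))
  have hEq : ((Finset.range (p^(e-1))).image (bosmaLenstraIter A B z P))
      = (Finset.univ.filter (fun x : ZMod (p ^ e) => P ∣ x)) :=
    Finset.eq_of_subset_of_card_le hST (by rw [hScard]; exact hcardT)
  have hXmem : X ∈ (Finset.univ.filter (fun x : ZMod (p ^ e) => P ∣ x)) :=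
    Finset.mem_filter.mpr ⟨Finset.mem_univ _, hX⟩
  rw [← hEq] at hXmem
  obtain ⟨n, hn, hiter⟩ := Finset.mem_image.mp hXmem
  exact ⟨n, Finset.mem_range.mp hn, hiter⟩
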